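/- Let n ≥ 1 and let F be a field with char(F) ≠ 2 and |F| ≥ n² + 1. Let φ, ψ : Σ_n → Σ_n be maps such that det(φ(x) + ψ(y)) = det(x + y) for all x, y ∈ Σ_n. Then ψ is injective. -/

import Mathlib

open Matrix

/-- The `F`-submodule of symmetric `n × n` matrices over `F` (the space `Σ_n`). -/
def symmSubmodule (F : Type*) [Field F] (n : ℕ) :
    Submodule F (Matrix (Fin n) (Fin n) F) where
  carrier := {a | aᵀ = a}
  add_mem' := by
    intro a b ha hb
    simp only [Set.mem_setOf_eq] at *
    rw [Matrix.transpose_add, ha, hb]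
  zero_mem' := Matrix.transpose_zero
  smul_mem' := by
    intro c a ha
    simp only [Set.mem_setOf_eq] at *
    rw [Matrix.transpose_smul, ha]

/-!
Since `φ x + ψ y` depends on `y` only through `ψ y`, `ψ y₁ = ψ y₂` forces
`det (X + (y₁ - y₂)) = det X` for every symmetric `X`. Over a field of characteristic `≠ 2` a
symmetric `C` is congruent to a diagonal matrix `D`, and the identity transfers to
`det (Y + D) = det Y` for all symmetric `Y`. Taking `Y` diagonal with a zero at a position
where `D` does not vanish and `1 - D` elsewhere makes the left side nonzero and the right side
zero, so `D = 0` and hence `y₁ = y₂`.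
-/

section

variable {ι F : Type*} [Fintype ι] [DecidableEq ι] [Field F]

theorem Matrix.IsSymm.exists_isUnit_transpose_mul_mul_eq_diagonal [Invertible (2 : F)]
    {C : Matrix ι ι F} (hC : C.IsSymm) :
    ∃ P : Matrix ι ι F, IsUnit P ∧ ∃ d : ι → F, Pᵀ * C * P = diagonal d := by
  set B : LinearMap.BilinForm F (ι → F) := Matrix.toLinearMap₂' F C
  have hB : LinearMap.IsSymm B := by
    rw [LinearMap.isSymm_def]
    intro x y
    rw [RingHom.id_apply, Matrix.toLinearMap₂'_apply', Matrix.toLinearMap₂'_apply',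
      Matrix.dotProduct_mulVec, ← Matrix.mulVec_transpose, hC.eq, dotProduct_comm]
  obtain ⟨v₀, hv₀⟩ := LinearMap.BilinForm.exists_orthogonal_basis hB
  let e : ι ≃ Fin _ := Fintype.equivFinOfCardEq (Module.finrank_fintype_fun_eq_card F).symm
  let v := v₀.reindex e.symm
  have hv : ∀ i j, i ≠ j → B (v i) (v j) = 0 := fun i j hij => by
    simpa only [v, Module.Basis.reindex_apply, Equiv.symm_symm] using hv₀ (e.injective.ne hij)
  let _ := (Pi.basisFun F ι).invertibleToMatrix v
  refine ⟨(Pi.basisFun F ι).toMatrix v, isUnit_of_invertible _, fun i => B (v i) (v i), ?_⟩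
  have hcongr :=
    LinearMap.toMatrix₂_mul_basis_toMatrix (Pi.basisFun F ι) (Pi.basisFun F ι) v v B
  rw [LinearMap.toMatrix₂_basisFun, LinearMap.toMatrix'_toLinearMap₂'] at hcongr
  rw [hcongr]
  ext i j
  rcases eq_or_ne i j with rfl | hij
  · simp [LinearMap.toMatrix₂_apply, B]
  · simp [LinearMap.toMatrix₂_apply, hij, hv i j hij]

theorem eq_zero_of_forall_prod_add_eq_prod {R : Type*} [CommRing R] {d : ι → R}
    (h : ∀ y : ι → R, ∏ i, (y i + d i) = ∏ i, y i) : d = 0 := by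
  by_contra hd
  obtain ⟨i₀, hi₀⟩ := Function.ne_iff.mp hd
  have := h (Pi.mulSingle i₀ (d i₀) - d)
  simp only [Pi.sub_apply, sub_add_cancel, Fintype.prod_pi_mulSingle'] at this
  exact hi₀ (this.trans (Finset.prod_eq_zero (Finset.mem_univ i₀) (by simp)))

theorem forall_det_add_transpose_mul_mul_eq_det {C P : Matrix ι ι F} (hP : IsUnit P)
    (h : ∀ X : Matrix ι ι F, X.IsSymm → (X + C).det = X.det) :
    ∀ Y : Matrix ι ι F, Y.IsSymm → (Y + Pᵀ * C * P).det = Y.det := by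
  intro Y hY
  set X := P⁻¹ᵀ * Y * P⁻¹
  have hX : X.IsSymm := by
    simp only [X, IsSymm, transpose_mul, transpose_transpose, hY.eq, Matrix.mul_assoc]
  have hYX : Y = Pᵀ * X * P := by
    have hPP : P⁻¹ * P = 1 := nonsing_inv_mul P ((isUnit_iff_isUnit_det P).mp hP)
    calc Y = (P⁻¹ * P)ᵀ * Y * (P⁻¹ * P) := by rw [hPP, transpose_one, one_mul, mul_one]
      _ = Pᵀ * X * P := by simp only [X, transpose_mul, Matrix.mul_assoc]
  rw [hYX, ← Matrix.add_mul, ← Matrix.mul_add, det_mul, det_mul, h X hX, ← det_mul,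
    ← det_mul]

theorem Matrix.IsSymm.eq_zero_of_forall_det_add_eq_det [Invertible (2 : F)] {C : Matrix ι ι F}
    (hC : C.IsSymm) (h : ∀ X : Matrix ι ι F, X.IsSymm → (X + C).det = X.det) : C = 0 := by
  obtain ⟨P, hP, d, hd⟩ := hC.exists_isUnit_transpose_mul_mul_eq_diagonal
  have hd0 : d = 0 := eq_zero_of_forall_prod_add_eq_prod fun y => by
    simpa [hd, diagonal_add] using
      forall_det_add_transpose_mul_mul_eq_det hP h (diagonal y) (isSymm_diagonal y)
  rwa [hd0, diagonal_zero', hP.mul_left_eq_zero,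
    ((isUnit_transpose P).mpr hP).mul_right_eq_zero] at hd

end

theorem psi_injective_symm_general
    {F : Type*} [Field F] {n : ℕ}
    (hchar : ringChar F ≠ 2)
    (φ ψ : symmSubmodule F n → symmSubmodule F n)
    (h : ∀ x y : symmSubmodule F n,
      ((φ x : Matrix (Fin n) (Fin n) F) + (ψ y : Matrix (Fin n) (Fin n) F)).det
        = ((x : Matrix (Fin n) (Fin n) F) + (y : Matrix (Fin n) (Fin n) F)).det) :
    Function.Injective ψ := by
  let _ : Invertible (2 : F) := invertibleOfNonzero (Ring.two_ne_zero hchar)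
  intro y₁ y₂ hψ
  rw [← sub_eq_zero, ← Submodule.coe_eq_zero]
  refine IsSymm.eq_zero_of_forall_det_add_eq_det (y₁ - y₂).2 fun X hX => ?_
  let x : symmSubmodule F n := ⟨X - y₂, Submodule.sub_mem _ hX y₂.2⟩
  calc (X + ↑(y₁ - y₂)).det = ((x : Matrix (Fin n) (Fin n) F) + y₁).det := by
        rw [Submodule.coe_sub]; congr 1; change _ = X - y₂ + y₁; abel
    _ = ((x : Matrix (Fin n) (Fin n) F) + y₂).det := by rw [← h x y₁, ← h x y₂, hψ]
    _ = X.det := by rw [Submodule.coe_mk, sub_add_cancel]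

/-- If `φ, ψ : Σ_n → Σ_n` satisfy `det (φ x + ψ y) = det (x + y)` for all symmetric
`x, y`, then `ψ` is injective. -/
theorem psi_injective_symm
    {F : Type*} [Field F] {n : ℕ} (hn : 1 ≤ n)
    (hchar : ringChar F ≠ 2) (hcard : (n ^ 2 + 1 : Cardinal) ≤ Cardinal.mk F)
    (φ ψ : symmSubmodule F n → symmSubmodule F n)
    (h : ∀ x y : symmSubmodule F n,
      ((φ x : Matrix (Fin n) (Fin n) F) + (ψ y : Matrix (Fin n) (Fin n) F)).det
        = ((x : Matrix (Fin n) (Fin n) F) + (y : Matrix (Fin n) (Fin n) F)).det) :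
    Function.Injective ψ :=
  psi_injective_symm_general hchar φ ψ h
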